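/- arXiv:1612.07025 — 4 statements merged into one kernel-verified Lean document; each statement's English description precedes it below -/
import Mathlib

section
/- Let x_i, x_j ∈ {0,1}^n with supports of sizes n_i = |x_i|, n_j = |x_j|, overlap n_ij = |x_i ∩ x_j|, and suppose d+1 ≤ n_ij. Then the squared normalized Conjunctive kernel is non-increasing in the arity: (C(n_ij,d)²)/(C(n_i,d)C(n_j,d)) ≥ (C(n_ij,d+1)²)/(C(n_i,d+1)C(n_j,d+1)). -/
open Finset

def supp {n : ℕ} (x : Fin n → Bool) : Finset (Fin n) :=
  Finset.univ.filter (fun i => x i = true)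

lemma key_nat (a b c d : ℕ) (ha : d + 1 ≤ a) (hab : a ≤ b) (hac : a ≤ c) :
    (a.choose (d+1))^2 * (b.choose d * c.choose d) ≤
      (a.choose d)^2 * (b.choose (d+1) * c.choose (d+1)) := by
  have hpos : 0 < (d+1)^2 := by positivity
  apply Nat.le_of_mul_le_mul_right _ hpos
  have ea : a.choose (d+1) * (d+1) = a.choose d * (a - d) := Nat.choose_succ_right_eq a d
  have eb : b.choose (d+1) * (d+1) = b.choose d * (b - d) := Nat.choose_succ_right_eq b d
  have ec : c.choose (d+1) * (d+1) = c.choose d * (c - d) := Nat.choose_succ_right_eq c d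
  have h1 : (a.choose (d+1))^2 * (b.choose d * c.choose d) * (d+1)^2
      = (a.choose d)^2 * (a-d)^2 * (b.choose d * c.choose d) := by
    calc (a.choose (d+1))^2 * (b.choose d * c.choose d) * (d+1)^2
        = (a.choose (d+1) * (d+1))^2 * (b.choose d * c.choose d) := by ring
      _ = (a.choose d * (a-d))^2 * (b.choose d * c.choose d) := by rw [ea]
      _ = (a.choose d)^2 * (a-d)^2 * (b.choose d * c.choose d) := by ring
  have h2 : (a.choose d)^2 * (b.choose (d+1) * c.choose (d+1)) * (d+1)^2
      = (a.choose d)^2 * (b.choose d * (b-d) * (c.choose d * (c-d))) := by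
    have : (b.choose (d+1) * (d+1)) * (c.choose (d+1) * (d+1))
        = (b.choose d * (b-d)) * (c.choose d * (c-d)) := by rw [eb, ec]
    calc (a.choose d)^2 * (b.choose (d+1) * c.choose (d+1)) * (d+1)^2
        = (a.choose d)^2 * ((b.choose (d+1) * (d+1)) * (c.choose (d+1) * (d+1))) := by ring
      _ = (a.choose d)^2 * ((b.choose d * (b-d)) * (c.choose d * (c-d))) := by rw [this]
      _ = (a.choose d)^2 * (b.choose d * (b-d) * (c.choose d * (c-d))) := by ring
  rw [h1, h2]
  have hsq : (a-d)^2 ≤ (b-d) * (c-d) := by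
    rw [pow_two]
    exact Nat.mul_le_mul (Nat.sub_le_sub_right hab d) (Nat.sub_le_sub_right hac d)
  calc (a.choose d)^2 * (a-d)^2 * (b.choose d * c.choose d)
      ≤ (a.choose d)^2 * ((b-d) * (c-d)) * (b.choose d * c.choose d) := by
        exact Nat.mul_le_mul_right _ (Nat.mul_le_mul_left _ hsq)
    _ = (a.choose d)^2 * (b.choose d * (b-d) * (c.choose d * (c-d))) := by ring

theorem normalized_conj_kernel_sq_antitone {n : ℕ} (xi xj : Fin n → Bool) (d : ℕ)
    (h : d + 1 ≤ (supp xi ∩ supp xj).card) :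
    ((Nat.choose ((supp xi ∩ supp xj).card) (d + 1) : ℝ)) ^ 2
        / (Nat.choose ((supp xi).card) (d + 1) * Nat.choose ((supp xj).card) (d + 1))
      ≤ ((Nat.choose ((supp xi ∩ supp xj).card) d : ℝ)) ^ 2
        / (Nat.choose ((supp xi).card) d * Nat.choose ((supp xj).card) d) := by
  set a := (supp xi ∩ supp xj).card with ha
  set b := (supp xi).card with hb
  set c := (supp xj).card with hc
  have hab : a ≤ b := card_le_card inter_subset_left
  have hac : a ≤ c := card_le_card inter_subset_right
  have hbd : d + 1 ≤ b := le_trans h hab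
  have hcd : d + 1 ≤ c := le_trans h hac
  have p1 : (0:ℝ) < (b.choose (d+1) : ℝ) * (c.choose (d+1)) := by
    have := Nat.choose_pos hbd
    have := Nat.choose_pos hcd
    positivity
  have p2 : (0:ℝ) < (b.choose d : ℝ) * (c.choose d) := by
    have := Nat.choose_pos (le_trans (Nat.le_succ d) hbd)
    have := Nat.choose_pos (le_trans (Nat.le_succ d) hcd)
    positivity
  rw [div_le_div_iff₀ p1 p2]
  have := key_nat a b c d h hab hac
  calc ((a.choose (d+1) : ℝ))^2 * ((b.choose d : ℝ) * (c.choose d))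
      = (((a.choose (d+1))^2 * (b.choose d * c.choose d) : ℕ) : ℝ) := by push_cast; ring
    _ ≤ (((a.choose d)^2 * (b.choose (d+1) * c.choose (d+1)) : ℕ) : ℝ) := by
        exact_mod_cast this
    _ = ((a.choose d : ℝ))^2 * ((b.choose (d+1) : ℝ) * (c.choose (d+1))) := by push_cast; ring
end

section
/- For natural numbers n, n_j, d with n_j + d ≤ n, the ratio C(n−n_j−1, d−1)/C(n−1, d−1) is non-increasing in d: C(n−n_j−1, d−1)/C(n−1, d−1) ≥ C(n−n_j−1, d)/C(n−1, d) (for d ≥ 1). -/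
lemma choose_cross (m N d : ℕ) (hm : m ≤ N) (hd : 1 ≤ d) :
    Nat.choose m d * Nat.choose N (d - 1) ≤ Nat.choose m (d - 1) * Nat.choose N d := by
  obtain ⟨k, rfl⟩ := Nat.exists_eq_add_of_le hd
  rw [Nat.add_comm] at *; simp only [Nat.add_sub_cancel] at *
  have h1 : Nat.choose m (k + 1) * (k + 1) = Nat.choose m k * (m - k) :=
    Nat.choose_succ_right_eq m k
  have h2 : Nat.choose N (k + 1) * (k + 1) = Nat.choose N k * (N - k) :=
    Nat.choose_succ_right_eq N k
  have hk : 0 < k + 1 := Nat.succ_pos k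
  apply Nat.le_of_mul_le_mul_right _ hk
  calc Nat.choose m (k + 1) * Nat.choose N k * (k + 1)
      = Nat.choose m (k + 1) * (k + 1) * Nat.choose N k := by ring
    _ = Nat.choose m k * (m - k) * Nat.choose N k := by rw [h1]
    _ ≤ Nat.choose m k * (N - k) * Nat.choose N k := by
        exact Nat.mul_le_mul_right _ (Nat.mul_le_mul_left _ (Nat.sub_le_sub_right hm k))
    _ = Nat.choose m k * (Nat.choose N (k + 1) * (k + 1)) := by rw [h2]; ring
    _ = Nat.choose m k * Nat.choose N (k + 1) * (k + 1) := by ring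

theorem disj_ratio_step (n nj d : ℕ) (hd : 1 ≤ d) (h : nj + d ≤ n) :
    (Nat.choose (n - nj - 1) d : ℝ) / Nat.choose (n - 1) d
      ≤ (Nat.choose (n - nj - 1) (d - 1) : ℝ) / Nat.choose (n - 1) (d - 1) := by
  have hdn : d ≤ n := le_trans (Nat.le_add_left d nj) h
  have hden1 : 0 < Nat.choose (n - 1) (d - 1) := by
    apply Nat.choose_pos
    omega
  have hm : n - nj - 1 ≤ n - 1 := by omega
  have hrhs : (0:ℝ) ≤ (Nat.choose (n - nj - 1) (d - 1) : ℝ) / Nat.choose (n - 1) (d - 1) :=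
    div_nonneg (Nat.cast_nonneg _) (Nat.cast_nonneg _)
  by_cases hden2 : Nat.choose (n - 1) d = 0
  · rw [hden2]
    push_cast
    rw [div_zero]
    exact hrhs
  · have hden2' : (0:ℝ) < Nat.choose (n - 1) d := by
      exact_mod_cast Nat.pos_of_ne_zero hden2
    have hden1' : (0:ℝ) < Nat.choose (n - 1) (d - 1) := by exact_mod_cast hden1
    rw [div_le_div_iff₀ hden2' hden1']
    have := choose_cross (n - nj - 1) (n - 1) d hm hd
    exact_mod_cast this
end

section
/- Let x_i, x_j ∈ {0,1}^n with nonempty supports, and let κ_∨^d denote the Disjunctive kernel of arity d. For 1 ≤ d with n_j + d ≤ n, the ratio κ_∨^d(x_i,x_j)/κ_∨^d(x_i,x_i) is non-decreasing in d: κ_∨^d(x_i,x_j)/κ_∨^d(x_i,x_i) ≤ κ_∨^{d+1}(x_i,x_j)/κ_∨^{d+1}(x_i,x_i). -/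
open Finset

def dKer {n : ℕ} (d : ℕ) (x z : Fin n → Bool) : ℕ :=
  ((Finset.powersetCard d (Finset.univ : Finset (Fin n))).filter
    (fun S => (S ∩ supp x).Nonempty ∧ (S ∩ supp z).Nonempty)).card


lemma core_ineq {A B : Finset ℕ} (w φ : ℕ → ℕ) (h : ∀ x ∈ A, ∀ y ∈ B, φ x ≤ φ y) :
    (∑ x ∈ A, w x * φ x) * (∑ y ∈ B, w y) ≤ (∑ x ∈ A, w x) * (∑ y ∈ B, w y * φ y) := by
  rw [Finset.sum_mul_sum, Finset.sum_mul_sum]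
  refine Finset.sum_le_sum fun x hx => Finset.sum_le_sum fun y hy => ?_
  calc w x * φ x * w y = w x * w y * φ x := by ring
    _ ≤ w x * w y * φ y := Nat.mul_le_mul_left _ (h x hx y hy)
    _ = w x * (w y * φ y) := by ring

lemma step_lower {I J : Finset ℕ} (w φ : ℕ → ℕ) (hIJ : I ⊆ J)
    (h : ∀ x ∈ I, ∀ y ∈ J \ I, φ x ≤ φ y) :
    (∑ x ∈ I, w x * φ x) * (∑ y ∈ J, w y) ≤ (∑ x ∈ I, w x) * (∑ y ∈ J, w y * φ y) := by
  rw [← Finset.sum_sdiff hIJ (f := w), ← Finset.sum_sdiff hIJ (f := fun y => w y * φ y),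
    Nat.mul_add, Nat.mul_add]
  exact Nat.add_le_add (core_ineq w φ h) (le_of_eq (Nat.mul_comm _ _))

lemma step_upper {I J : Finset ℕ} (w φ : ℕ → ℕ) (hIJ : I ⊆ J)
    (h : ∀ y ∈ J \ I, ∀ x ∈ I, φ y ≤ φ x) :
    (∑ y ∈ J, w y * φ y) * (∑ x ∈ I, w x) ≤ (∑ y ∈ J, w y) * (∑ x ∈ I, w x * φ x) := by
  rw [← Finset.sum_sdiff hIJ (f := w), ← Finset.sum_sdiff hIJ (f := fun y => w y * φ y),
    Nat.add_mul, Nat.add_mul]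
  exact Nat.add_le_add (core_ineq w φ h) (le_of_eq (Nat.mul_comm _ _))

lemma key_ineq (w φ : ℕ → ℕ) (hφ : Monotone φ) {L1 U1 L2 U2 : ℕ}
    (hL : L1 ≤ L2) (hU : U1 ≤ U2) :
    (∑ k ∈ Finset.Ico L1 U1, w k * φ k) * (∑ k ∈ Finset.Ico L2 U2, w k)
      ≤ (∑ k ∈ Finset.Ico L1 U1, w k) * (∑ k ∈ Finset.Ico L2 U2, w k * φ k) := by
  set J := Finset.Ico L1 U2 with hJ
  have hs1 : Finset.Ico L1 U1 ⊆ J := Finset.Ico_subset_Ico le_rfl hU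
  have hs2 : Finset.Ico L2 U2 ⊆ J := Finset.Ico_subset_Ico hL le_rfl
  have h1 : (∑ k ∈ Finset.Ico L1 U1, w k * φ k) * (∑ k ∈ J, w k)
      ≤ (∑ k ∈ Finset.Ico L1 U1, w k) * (∑ k ∈ J, w k * φ k) := by
    refine step_lower w φ hs1 ?_
    intro x hx y hy
    simp only [Finset.mem_sdiff, Finset.mem_Ico, hJ] at hx hy
    exact hφ (by omega)
  have h2 : (∑ k ∈ J, w k * φ k) * (∑ k ∈ Finset.Ico L2 U2, w k)
      ≤ (∑ k ∈ J, w k) * (∑ k ∈ Finset.Ico L2 U2, w k * φ k) := by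
    refine step_upper w φ hs2 ?_
    intro y hy x hx
    simp only [Finset.mem_sdiff, Finset.mem_Ico, hJ] at hx hy
    exact hφ (by omega)
  rcases Nat.eq_zero_or_pos (∑ k ∈ J, w k) with h0 | hpos
  · have : (∑ k ∈ Finset.Ico L2 U2, w k) = 0 := by
      have := Finset.sum_le_sum_of_subset (f := w) hs2
      omega
    simp [this]
  · refine Nat.le_of_mul_le_mul_right ?_ hpos
    calc (∑ k ∈ Finset.Ico L1 U1, w k * φ k) * (∑ k ∈ Finset.Ico L2 U2, w k) * (∑ k ∈ J, w k)
        = ((∑ k ∈ Finset.Ico L1 U1, w k * φ k) * (∑ k ∈ J, w k)) * (∑ k ∈ Finset.Ico L2 U2, w k) := by ring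
      _ ≤ ((∑ k ∈ Finset.Ico L1 U1, w k) * (∑ k ∈ J, w k * φ k)) * (∑ k ∈ Finset.Ico L2 U2, w k) := Nat.mul_le_mul_right _ h1
      _ = (∑ k ∈ Finset.Ico L1 U1, w k) * ((∑ k ∈ J, w k * φ k) * (∑ k ∈ Finset.Ico L2 U2, w k)) := by ring
      _ ≤ (∑ k ∈ Finset.Ico L1 U1, w k) * ((∑ k ∈ J, w k) * (∑ k ∈ Finset.Ico L2 U2, w k * φ k)) := Nat.mul_le_mul_left _ h2
      _ = (∑ k ∈ Finset.Ico L1 U1, w k) * (∑ k ∈ Finset.Ico L2 U2, w k * φ k) * (∑ k ∈ J, w k) := by ring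

lemma hockey (e : ℕ) : ∀ U L, L ≤ U →
    (∑ k ∈ Finset.Ico L U, Nat.choose k e) + Nat.choose L (e+1) = Nat.choose U (e+1) := by
  intro U
  induction U with
  | zero => intro L hL; interval_cases L; simp
  | succ U ih =>
    intro L hL
    rcases Nat.eq_or_lt_of_le hL with h | h
    · subst h; simp
    · have hL' : L ≤ U := Nat.lt_succ_iff.mp h
      rw [Finset.sum_Ico_succ_top hL', Nat.choose_succ_succ' (U) (e)]
      have := ih L hL'
      omega

lemma count_meet' {n d : ℕ} (T A : Finset (Fin n)) :
    ((Finset.powersetCard d T).filter (fun S => (S ∩ A).Nonempty)).card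
      + Nat.choose ((T \ A).card) d = Nat.choose T.card d := by
  have h := Finset.card_filter_add_card_filter_not
    (s := Finset.powersetCard d T) (p := fun S => (S ∩ A).Nonempty)
  have h2 : (Finset.powersetCard d T).filter (fun S => ¬ (S ∩ A).Nonempty)
      = Finset.powersetCard d (T \ A) := by
    ext S
    simp only [Finset.mem_filter, Finset.mem_powersetCard,
      Finset.not_nonempty_iff_eq_empty, ← Finset.disjoint_iff_inter_eq_empty,
      Finset.subset_sdiff]
    tauto
  rw [h2, Finset.card_powersetCard] at h
  rw [h, Finset.card_powersetCard]

lemma split_lemma {n d : ℕ} (A B : Finset (Fin n)) :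
    ((Finset.powersetCard d (univ : Finset (Fin n))).filter
       (fun S => (S ∩ A).Nonempty ∧ (S ∩ B).Nonempty)).card
    + ((Finset.powersetCard d (Bᶜ)).filter (fun S => (S ∩ A).Nonempty)).card
    = ((Finset.powersetCard d (univ : Finset (Fin n))).filter (fun S => (S ∩ A).Nonempty)).card := by
  have h := Finset.card_filter_add_card_filter_not
    (s := (Finset.powersetCard d (univ : Finset (Fin n))).filter (fun S => (S ∩ A).Nonempty))
    (p := fun S => (S ∩ B).Nonempty)
  have h1 : ((Finset.powersetCard d (univ : Finset (Fin n))).filter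
      (fun S => (S ∩ A).Nonempty)).filter (fun S => (S ∩ B).Nonempty)
      = (Finset.powersetCard d (univ : Finset (Fin n))).filter
        (fun S => (S ∩ A).Nonempty ∧ (S ∩ B).Nonempty) := by
    rw [Finset.filter_filter]
  have h2 : ((Finset.powersetCard d (univ : Finset (Fin n))).filter
      (fun S => (S ∩ A).Nonempty)).filter (fun S => ¬ (S ∩ B).Nonempty)
      = (Finset.powersetCard d (Bᶜ)).filter (fun S => (S ∩ A).Nonempty) := by
    ext S
    simp only [Finset.mem_filter, Finset.mem_powersetCard,
      Finset.not_nonempty_iff_eq_empty, ← Finset.disjoint_iff_inter_eq_empty,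
      Finset.disjoint_left, Finset.subset_iff, Finset.mem_compl, Finset.mem_univ]
    tauto
  rw [h1, h2] at h
  exact h

theorem disj_kernel_ratio_mono {n : ℕ} (xi xj : Fin n → Bool) (d : ℕ)
    (hxi : (supp xi).Nonempty) (hxj : (supp xj).Nonempty)
    (hd : 1 ≤ d) (hn : (supp xj).card + d ≤ n) :
    (dKer d xi xj : ℝ) / dKer d xi xi
      ≤ (dKer (d + 1) xi xj : ℝ) / dKer (d + 1) xi xi := by
  obtain ⟨e, rfl⟩ : ∃ e, d = e + 1 := ⟨d - 1, (Nat.succ_pred_eq_of_pos hd).symm⟩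
  set A := supp xi with hA
  set B := supp xj with hB
  have hn1 : 1 ≤ n := by obtain ⟨i, _⟩ := hxi; exact i.pos
  have ha : 1 ≤ A.card := Finset.card_pos.mpr hxi
  have hb : 1 ≤ B.card := Finset.card_pos.mpr hxj
  have hcomplA : (Aᶜ : Finset (Fin n)).card = n - A.card := by rw [Finset.card_compl, Fintype.card_fin]
  have hcardA : A.card ≤ n := by simpa using Finset.card_le_card (Finset.subset_univ A)
  have hcardB : B.card ≤ n := by simpa using Finset.card_le_card (Finset.subset_univ B)
  have hU1 : (Bᶜ : Finset (Fin n)).card = n - B.card := by rw [Finset.card_compl, Fintype.card_fin]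
  have hL2n : (Aᶜ : Finset (Fin n)).card < n := by omega
  have hL1L2 : (Bᶜ \ A).card ≤ (Aᶜ : Finset (Fin n)).card := by
    refine Finset.card_le_card ?_
    intro x hx
    simp only [Finset.mem_sdiff, Finset.mem_compl] at hx ⊢
    exact hx.2
  have hL1U1 : (Bᶜ \ A).card ≤ (Bᶜ : Finset (Fin n)).card := Finset.card_le_card Finset.sdiff_subset
  have hU1n : (Bᶜ : Finset (Fin n)).card ≤ n := by omega
  -- sum expressions
  have hAsum : ∀ e', ((Finset.powersetCard (e'+1) (univ : Finset (Fin n))).filter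
      (fun S => (S ∩ A).Nonempty)).card = ∑ k ∈ Finset.Ico (Aᶜ : Finset (Fin n)).card n, Nat.choose k e' := by
    intro e'
    have h1 := count_meet' (n := n) (d := e' + 1) univ A
    have h2 := hockey e' n (Aᶜ : Finset (Fin n)).card (by omega)
    rw [Finset.card_univ, Fintype.card_fin] at h1
    have h3 : univ \ A = Aᶜ := (Finset.compl_eq_univ_sdiff A).symm
    rw [h3] at h1
    omega
  have hBsum : ∀ e', ((Finset.powersetCard (e'+1) (Bᶜ : Finset (Fin n))).filter
      (fun S => (S ∩ A).Nonempty)).card = ∑ k ∈ Finset.Ico (Bᶜ \ A).card (Bᶜ : Finset (Fin n)).card, Nat.choose k e' := by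
    intro e'
    have h1 := count_meet' (n := n) (d := e' + 1) Bᶜ A
    have h2 := hockey e' (Bᶜ : Finset (Fin n)).card (Bᶜ \ A).card hL1U1
    omega
  -- dKer identifications
  have hii : ∀ e', dKer (e'+1) xi xi = ∑ k ∈ Finset.Ico (Aᶜ : Finset (Fin n)).card n, Nat.choose k e' := by
    intro e'
    rw [← hAsum e']
    unfold dKer
    simp only [← hA, and_self]
  have hij : ∀ e', dKer (e'+1) xi xj + (∑ k ∈ Finset.Ico (Bᶜ \ A).card (Bᶜ : Finset (Fin n)).card, Nat.choose k e')
      = ∑ k ∈ Finset.Ico (Aᶜ : Finset (Fin n)).card n, Nat.choose k e' := by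
    intro e'
    rw [← hAsum e', ← hBsum e']
    exact split_lemma A B
  -- key inequality
  have hmain : (∑ k ∈ Finset.Ico (Bᶜ \ A).card (Bᶜ : Finset (Fin n)).card, Nat.choose k (e+1)) * (∑ k ∈ Finset.Ico (Aᶜ : Finset (Fin n)).card n, Nat.choose k e)
      ≤ (∑ k ∈ Finset.Ico (Bᶜ \ A).card (Bᶜ : Finset (Fin n)).card, Nat.choose k e) * (∑ k ∈ Finset.Ico (Aᶜ : Finset (Fin n)).card n, Nat.choose k (e+1)) := by
    have hk := key_ineq (fun k => Nat.choose k e) (fun k => k - e)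
      (fun a b hab => Nat.sub_le_sub_right hab e) hL1L2 hU1n
    have hconv : ∀ (L U : ℕ), (∑ k ∈ Finset.Ico L U, Nat.choose k e * (k - e))
        = (∑ k ∈ Finset.Ico L U, Nat.choose k (e + 1)) * (e + 1) := by
      intro L U
      rw [Finset.sum_mul]
      exact Finset.sum_congr rfl fun k _ => (Nat.choose_succ_right_eq k e).symm
    rw [hconv, hconv] at hk
    refine Nat.le_of_mul_le_mul_right ?_ (Nat.succ_pos e)
    calc (∑ k ∈ Finset.Ico (Bᶜ \ A).card (Bᶜ : Finset (Fin n)).card, Nat.choose k (e+1)) * (∑ k ∈ Finset.Ico (Aᶜ : Finset (Fin n)).card n, Nat.choose k e) * (e+1)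
        = (∑ k ∈ Finset.Ico (Bᶜ \ A).card (Bᶜ : Finset (Fin n)).card, Nat.choose k (e+1)) * (e+1) * (∑ k ∈ Finset.Ico (Aᶜ : Finset (Fin n)).card n, Nat.choose k e) := by ring
      _ ≤ (∑ k ∈ Finset.Ico (Bᶜ \ A).card (Bᶜ : Finset (Fin n)).card, Nat.choose k e) * ((∑ k ∈ Finset.Ico (Aᶜ : Finset (Fin n)).card n, Nat.choose k (e+1)) * (e+1)) := hk
      _ = (∑ k ∈ Finset.Ico (Bᶜ \ A).card (Bᶜ : Finset (Fin n)).card, Nat.choose k e) * (∑ k ∈ Finset.Ico (Aᶜ : Finset (Fin n)).card n, Nat.choose k (e+1)) * (e+1) := by ring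
  -- positivity
  have hApos : ∀ e', e' + 1 ≤ n → 0 < ∑ k ∈ Finset.Ico (Aᶜ : Finset (Fin n)).card n, Nat.choose k e' := by
    intro e' he'
    have hmem : n - 1 ∈ Finset.Ico (Aᶜ : Finset (Fin n)).card n := by simp only [Finset.mem_Ico]; omega
    calc 0 < Nat.choose (n - 1) e' := Nat.choose_pos (by omega)
      _ ≤ ∑ k ∈ Finset.Ico (Aᶜ : Finset (Fin n)).card n, Nat.choose k e' :=
          Finset.single_le_sum (f := fun k => Nat.choose k e') (fun i _ => Nat.zero_le _) hmem
  -- pass to ℝ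
  set WB := ∑ k ∈ Finset.Ico (Bᶜ \ A).card (Bᶜ : Finset (Fin n)).card, Nat.choose k e
  set XB := ∑ k ∈ Finset.Ico (Bᶜ \ A).card (Bᶜ : Finset (Fin n)).card, Nat.choose k (e+1)
  set WA := ∑ k ∈ Finset.Ico (Aᶜ : Finset (Fin n)).card n, Nat.choose k e
  set XA := ∑ k ∈ Finset.Ico (Aᶜ : Finset (Fin n)).card n, Nat.choose k (e+1)
  have hAd : (0:ℝ) < WA := by exact_mod_cast hApos e (by omega)
  have hAd' : (0:ℝ) < XA := by exact_mod_cast hApos (e+1) (by omega)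
  have hij1 : (dKer (e+1) xi xj : ℝ) = WA - WB := by
    rw [eq_sub_iff_add_eq]; exact_mod_cast hij e
  have hij2 : (dKer (e+1+1) xi xj : ℝ) = XA - XB := by
    rw [eq_sub_iff_add_eq]; exact_mod_cast hij (e+1)
  rw [hii e, hii (e+1), hij1, hij2, div_le_div_iff₀ hAd hAd']
  have hmainR : (XB : ℝ) * WA ≤ WB * XA := by exact_mod_cast hmain
  nlinarith [hmainR]
end

section
/- Let x_i, x_j ∈ {0,1}^n with nonempty supports. The squared normalized Disjunctive kernel is non-decreasing in the arity: for d ≥ 1 with max(n_i,n_j) + d ≤ n, κ̃_∨^d(x_i,x_j)² ≤ κ̃_∨^{d+1}(x_i,x_j)², where κ̃_∨^d(x,z) = κ_∨^d(x,z)/sqrt(κ_∨^d(x,x)κ_∨^d(z,z)). -/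
open Finset

/-- Sum of binomials over an interval. -/
def Sm (D k M : ℕ) : ℕ := ∑ t ∈ Finset.Ico k M, Nat.choose t D

lemma hockey_s12 (D k : ℕ) {M : ℕ} (hM : k ≤ M) :
    k.choose (D+1) + Sm D k M = M.choose (D+1) := by
  induction M, hM using Nat.le_induction with
  | base => simp [Sm]
  | succ M hM ih =>
    have h1 : Sm D k (M+1) = Sm D k M + M.choose D := by
      simp [Sm, Finset.sum_Ico_succ_top hM]
    have h2 : (M+1).choose (D+1) = M.choose D + M.choose (D+1) :=
      Nat.choose_succ_succ M D
    omega

lemma Sm_split (D k m M : ℕ) (h1 : k ≤ m) (h2 : m ≤ M) :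
    Sm D k M = Sm D k m + Sm D m M :=
  (Finset.sum_Ico_consecutive _ h1 h2).symm

lemma Sm_pos {D k M : ℕ} (hkM : k < M) (hD : D ≤ M - 1) : 0 < Sm D k M := by
  have hmem : M - 1 ∈ Finset.Ico k M := Finset.mem_Ico.mpr ⟨by omega, by omega⟩
  have := Finset.single_le_sum (f := fun t => Nat.choose t D)
    (fun i _ => Nat.zero_le _) hmem
  have hpos : 0 < (M-1).choose D := Nat.choose_pos hD
  exact lt_of_lt_of_le hpos this

lemma cross (D k1 M1 k2 M2 : ℕ) (h : M1 ≤ k2) :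
    Sm (D+1) k1 M1 * Sm D k2 M2 ≤ Sm D k1 M1 * Sm (D+1) k2 M2 := by
  have key : Sm (D+1) k1 M1 * Sm D k2 M2 * (D+1) ≤ Sm D k1 M1 * Sm (D+1) k2 M2 * (D+1) := by
    have l1 : Sm (D+1) k1 M1 * (D+1) = ∑ t ∈ Finset.Ico k1 M1, Nat.choose t D * (t - D) := by
      simp only [Sm, Finset.sum_mul]
      exact Finset.sum_congr rfl fun t _ => Nat.choose_succ_right_eq t D
    have l2 : Sm (D+1) k2 M2 * (D+1) = ∑ s ∈ Finset.Ico k2 M2, Nat.choose s D * (s - D) := by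
      simp only [Sm, Finset.sum_mul]
      exact Finset.sum_congr rfl fun t _ => Nat.choose_succ_right_eq t D
    calc Sm (D+1) k1 M1 * Sm D k2 M2 * (D+1)
        = (Sm (D+1) k1 M1 * (D+1)) * Sm D k2 M2 := by ring
      _ = ∑ t ∈ Finset.Ico k1 M1, ∑ s ∈ Finset.Ico k2 M2,
            (Nat.choose t D * (t - D)) * Nat.choose s D := by
          rw [l1, Sm, Finset.sum_mul_sum]
      _ ≤ ∑ t ∈ Finset.Ico k1 M1, ∑ s ∈ Finset.Ico k2 M2,
            Nat.choose t D * (Nat.choose s D * (s - D)) := by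
          apply Finset.sum_le_sum
          intro t ht
          apply Finset.sum_le_sum
          intro s hs
          have ht' : t < M1 := (Finset.mem_Ico.mp ht).2
          have hs' : k2 ≤ s := (Finset.mem_Ico.mp hs).1
          have hts : t - D ≤ s - D := by omega
          calc Nat.choose t D * (t - D) * Nat.choose s D
              = Nat.choose t D * Nat.choose s D * (t - D) := by ring
            _ ≤ Nat.choose t D * Nat.choose s D * (s - D) :=
                Nat.mul_le_mul_left _ hts
            _ = Nat.choose t D * (Nat.choose s D * (s - D)) := by ring
      _ = Sm D k1 M1 * (Sm (D+1) k2 M2 * (D+1)) := by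
          rw [l2, Sm, Finset.sum_mul_sum]
      _ = Sm D k1 M1 * Sm (D+1) k2 M2 * (D+1) := by ring
  exact Nat.le_of_mul_le_mul_right key (Nat.succ_pos D)

lemma overlap (D k1 M1 k2 M2 : ℕ) (hk : k1 ≤ k2) (hM : M1 ≤ M2) :
    Sm (D+1) k1 M1 * Sm D k2 M2 ≤ Sm D k1 M1 * Sm (D+1) k2 M2 := by
  rcases le_or_gt M1 k2 with h | h
  · exact cross D k1 M1 k2 M2 h
  · rcases le_or_gt M1 k1 with h0 | h0
    · omega
    -- k1 < M1, k2 < M1, k1 ≤ k2 ≤ M1 ≤ M2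
    have hk2M1 : k2 ≤ M1 := le_of_lt h
    have s1 : Sm D k1 M1 = Sm D k1 k2 + Sm D k2 M1 := Sm_split D k1 k2 M1 hk hk2M1
    have s1' : Sm (D+1) k1 M1 = Sm (D+1) k1 k2 + Sm (D+1) k2 M1 := Sm_split _ k1 k2 M1 hk hk2M1
    have s2 : Sm D k2 M2 = Sm D k2 M1 + Sm D M1 M2 := Sm_split D k2 M1 M2 hk2M1 hM
    have s2' : Sm (D+1) k2 M2 = Sm (D+1) k2 M1 + Sm (D+1) M1 M2 := Sm_split _ k2 M1 M2 hk2M1 hM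
    have c1 := cross D k1 k2 k2 M1 le_rfl
    have c2 := cross D k1 k2 M1 M2 hk2M1
    have c3 := cross D k2 M1 M1 M2 le_rfl
    rw [s1, s1', s2, s2']
    nlinarith [c1, c2, c3]

lemma dKer_comm {n : ℕ} (e : ℕ) (x z : Fin n → Bool) : dKer e x z = dKer e z x := by
  unfold dKer
  congr 1
  apply Finset.filter_congr
  intro S _
  exact and_comm

lemma card_avoid {n : ℕ} (e : ℕ) (A : Finset (Fin n)) :
    ((Finset.powersetCard e (Finset.univ : Finset (Fin n))).filter
      (fun S => S ∩ A = ∅)).card = (n - A.card).choose e := by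
  have heq : (Finset.powersetCard e (Finset.univ : Finset (Fin n))).filter
      (fun S => S ∩ A = ∅) = Finset.powersetCard e Aᶜ := by
    ext S
    have hiff : S ⊆ Aᶜ ↔ S ∩ A = ∅ := by
      rw [← Finset.disjoint_iff_inter_eq_empty, ← le_iff_subset, le_compl_iff_disjoint_right]
    simp only [Finset.mem_filter, Finset.mem_powersetCard, Finset.subset_univ, true_and, hiff]
    tauto
  rw [heq, Finset.card_powersetCard, Finset.card_compl, Fintype.card_fin]

lemma dKer_formula {n : ℕ} (x z : Fin n → Bool) (D : ℕ) :
    dKer (D+1) x z + Sm D (n - (supp x ∪ supp z).card) (n - (supp z).card)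
      = Sm D (n - (supp x).card) n := by
  classical
  set F := Finset.powersetCard (D+1) (Finset.univ : Finset (Fin n)) with hF
  have h1 : dKer (D+1) x z
      = (F.filter (fun S => ¬ (S ∩ supp x = ∅) ∧ ¬ (S ∩ supp z = ∅))).card := by
    unfold dKer
    congr 1
    apply Finset.filter_congr
    intro S _
    simp [Finset.nonempty_iff_ne_empty]
  have h2 : (F.filter (fun S => S ∩ supp x = ∅ ∧ S ∩ supp z = ∅)).card
      = (F.filter (fun S => S ∩ (supp x ∪ supp z) = ∅)).card := by
    congr 1
    apply Finset.filter_congr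
    intro S _
    simp [Finset.inter_union_distrib_left, Finset.union_eq_empty]
  have h3 : (F.filter (fun S => S ∩ supp x = ∅ ∨ S ∩ supp z = ∅)).card
      + (F.filter (fun S => ¬ (S ∩ supp x = ∅ ∨ S ∩ supp z = ∅))).card
      = F.card := Finset.card_filter_add_card_filter_not _
  have h3' : (F.filter (fun S => ¬ (S ∩ supp x = ∅ ∨ S ∩ supp z = ∅))).card
      = (F.filter (fun S => ¬ (S ∩ supp x = ∅) ∧ ¬ (S ∩ supp z = ∅))).card := by
    congr 1
    apply Finset.filter_congr
    intro S _
    tauto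
  have h4 : (F.filter (fun S => S ∩ supp x = ∅) ∪ F.filter (fun S => S ∩ supp z = ∅)).card
      + (F.filter (fun S => S ∩ supp x = ∅) ∩ F.filter (fun S => S ∩ supp z = ∅)).card
      = (F.filter (fun S => S ∩ supp x = ∅)).card
        + (F.filter (fun S => S ∩ supp z = ∅)).card := Finset.card_union_add_card_inter _ _
  have h5 : F.filter (fun S => S ∩ supp x = ∅ ∨ S ∩ supp z = ∅)
      = F.filter (fun S => S ∩ supp x = ∅) ∪ F.filter (fun S => S ∩ supp z = ∅) :=
    Finset.filter_or _ _ _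
  have h6 : F.filter (fun S => S ∩ supp x = ∅) ∩ F.filter (fun S => S ∩ supp z = ∅)
      = F.filter (fun S => S ∩ supp x = ∅ ∧ S ∩ supp z = ∅) :=
    (Finset.filter_and _ _ _).symm
  have hFc : F.card = n.choose (D+1) := by
    rw [hF, Finset.card_powersetCard, Finset.card_univ, Fintype.card_fin]
  have hcx := card_avoid (n := n) (D+1) (supp x)
  have hcz := card_avoid (n := n) (D+1) (supp z)
  have hcu := card_avoid (n := n) (D+1) (supp x ∪ supp z)
  rw [← hF] at hcx hcz hcu
  have k1 : (n - (supp x).card).choose (D+1) + Sm D (n - (supp x).card) n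
      = n.choose (D+1) := hockey_s12 D _ (Nat.sub_le n _)
  have hle : n - (supp x ∪ supp z).card ≤ n - (supp z).card :=
    Nat.sub_le_sub_left (Finset.card_le_card Finset.subset_union_right) n
  have k2 : (n - (supp x ∪ supp z).card).choose (D+1)
      + Sm D (n - (supp x ∪ supp z).card) (n - (supp z).card)
      = (n - (supp z).card).choose (D+1) := hockey_s12 D _ hle
  rw [h5] at h3
  rw [h6] at h4
  omega

set_option maxHeartbeats 1000000 in
theorem normalized_disj_kernel_sq_mono {n : ℕ} (xi xj : Fin n → Bool) (d : ℕ)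
    (hxi : (supp xi).Nonempty) (hxj : (supp xj).Nonempty)
    (hd : 1 ≤ d) (hn : max (supp xi).card (supp xj).card + d ≤ n) :
    (dKer d xi xj : ℝ) ^ 2 / (dKer d xi xi * dKer d xj xj)
      ≤ (dKer (d + 1) xi xj : ℝ) ^ 2 / (dKer (d + 1) xi xi * dKer (d + 1) xj xj) := by
  obtain ⟨D, rfl⟩ : ∃ D, d = D + 1 := ⟨d - 1, by omega⟩
  set a := (supp xi).card with ha
  set b := (supp xj).card with hb
  set c := (supp xi ∪ supp xj).card with hc
  have hab : a ≤ c := Finset.card_le_card Finset.subset_union_left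
  have hbc : b ≤ c := Finset.card_le_card Finset.subset_union_right
  have hcn : c ≤ n := by
    have := Finset.card_le_card (Finset.subset_univ (supp xi ∪ supp xj))
    simpa using this
  have ha1 : 1 ≤ a := hxi.card_pos
  have hb1 : 1 ≤ b := hxj.card_pos
  have han : a + (D + 1) ≤ n := le_trans (by omega : a + (D+1) ≤ max a b + (D+1)) hn
  have hbn : b + (D + 1) ≤ n := le_trans (by omega : b + (D+1) ≤ max a b + (D+1)) hn
  -- the identities
  have E1 : dKer (D+1) xi xj + Sm D (n - c) (n - b) = Sm D (n - a) n := dKer_formula xi xj D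
  have E1' : dKer (D+2) xi xj + Sm (D+1) (n - c) (n - b) = Sm (D+1) (n - a) n :=
    dKer_formula xi xj (D+1)
  have hcomm : (supp xj ∪ supp xi).card = c := by rw [Finset.union_comm]
  have F1 : dKer (D+1) xi xj + Sm D (n - c) (n - a) = Sm D (n - b) n := by
    have := dKer_formula xj xi D
    rwa [hcomm, ← dKer_comm (D+1) xi xj] at this
  have F1' : dKer (D+2) xi xj + Sm (D+1) (n - c) (n - a) = Sm (D+1) (n - b) n := by
    have := dKer_formula xj xi (D+1)
    rwa [hcomm, ← dKer_comm (D+2) xi xj] at this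
  have E2 : dKer (D+1) xi xi = Sm D (n - a) n := by
    have h := dKer_formula xi xi D
    rw [Finset.union_self] at h
    simpa [Sm] using h
  have E2' : dKer (D+2) xi xi = Sm (D+1) (n - a) n := by
    have h := dKer_formula xi xi (D+1)
    rw [Finset.union_self] at h
    simpa [Sm] using h
  have E3 : dKer (D+1) xj xj = Sm D (n - b) n := by
    have h := dKer_formula xj xj D
    rw [Finset.union_self] at h
    simpa [Sm] using h
  have E3' : dKer (D+2) xj xj = Sm (D+1) (n - b) n := by
    have h := dKer_formula xj xj (D+1)
    rw [Finset.union_self] at h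
    simpa [Sm] using h
  -- the overlap inequalities
  have O1 : Sm (D+1) (n - c) (n - b) * Sm D (n - a) n
      ≤ Sm D (n - c) (n - b) * Sm (D+1) (n - a) n :=
    overlap D (n - c) (n - b) (n - a) n (Nat.sub_le_sub_left hab n) (Nat.sub_le n b)
  have O2 : Sm (D+1) (n - c) (n - a) * Sm D (n - b) n
      ≤ Sm D (n - c) (n - a) * Sm (D+1) (n - b) n :=
    overlap D (n - c) (n - a) (n - b) n (Nat.sub_le_sub_left hbc n) (Nat.sub_le n a)
  -- positivity
  have posP1 : 0 < Sm D (n - a) n := Sm_pos (by omega) (by omega)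
  have posP2 : 0 < Sm (D+1) (n - a) n := Sm_pos (by omega) (by omega)
  have posQ1 : 0 < Sm D (n - b) n := Sm_pos (by omega) (by omega)
  have posQ2 : 0 < Sm (D+1) (n - b) n := Sm_pos (by omega) (by omega)
  -- step inequalities in ℕ
  have S1 : dKer (D+1) xi xj * Sm (D+1) (n - a) n ≤ dKer (D+2) xi xj * Sm D (n - a) n := by
    have e1 : Sm D (n - a) n = dKer (D+1) xi xj + Sm D (n - c) (n - b) := E1.symm
    have e2 : Sm (D+1) (n - a) n = dKer (D+2) xi xj + Sm (D+1) (n - c) (n - b) := E1'.symm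
    rw [e1, e2] at O1 ⊢
    nlinarith [O1]
  have S2 : dKer (D+1) xi xj * Sm (D+1) (n - b) n ≤ dKer (D+2) xi xj * Sm D (n - b) n := by
    have e1 : Sm D (n - b) n = dKer (D+1) xi xj + Sm D (n - c) (n - a) := F1.symm
    have e2 : Sm (D+1) (n - b) n = dKer (D+2) xi xj + Sm (D+1) (n - c) (n - a) := F1'.symm
    rw [e1, e2] at O2 ⊢
    nlinarith [O2]
  have key : dKer (D+1) xi xj ^ 2 * (Sm (D+1) (n - a) n * Sm (D+1) (n - b) n)
      ≤ dKer (D+2) xi xj ^ 2 * (Sm D (n - a) n * Sm D (n - b) n) := by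
    calc dKer (D+1) xi xj ^ 2 * (Sm (D+1) (n - a) n * Sm (D+1) (n - b) n)
        = (dKer (D+1) xi xj * Sm (D+1) (n - a) n) * (dKer (D+1) xi xj * Sm (D+1) (n - b) n) := by
          ring
      _ ≤ (dKer (D+2) xi xj * Sm D (n - a) n) * (dKer (D+2) xi xj * Sm D (n - b) n) :=
          Nat.mul_le_mul S1 S2
      _ = dKer (D+2) xi xj ^ 2 * (Sm D (n - a) n * Sm D (n - b) n) := by ring
  -- conclude over ℝ
  have hP1 : (0:ℝ) < (Sm D (n - a) n : ℝ) := by exact_mod_cast posP1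
  have hP2 : (0:ℝ) < (Sm (D+1) (n - a) n : ℝ) := by exact_mod_cast posP2
  have hQ1 : (0:ℝ) < (Sm D (n - b) n : ℝ) := by exact_mod_cast posQ1
  have hQ2 : (0:ℝ) < (Sm (D+1) (n - b) n : ℝ) := by exact_mod_cast posQ2
  rw [E2, E2', E3, E3', div_le_div_iff₀ (mul_pos hP1 hQ1) (mul_pos hP2 hQ2)]
  have goalN : dKer (D+1) xi xj ^ 2 * (Sm (D+1) (n - a) n * Sm (D+1) (n - b) n)
      ≤ dKer (D+1+1) xi xj ^ 2 * (Sm D (n - a) n * Sm D (n - b) n) := key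
  exact_mod_cast goalN
end
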